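/- Let G be an elongated triangular prism on 10 vertices obtained by subdividing the three non-triangular edges of the triangular prism, adding the four new vertices one on the first edge, one on the second edge, and two on the third. Then the complement cG contains a K_{3,3,1,1} minor. -/
import Mathlib


/-- `H` is a minor of `G`: there are pairwise disjoint nonempty branch sets in `G`,
one for each vertex of `H`, each inducing a connected subgraph, such that every edge
of `H` is realized by an edge of `G` between the corresponding branch sets. -/
def SimpleGraph.HasMinor {α β : Type*} (G : SimpleGraph α) (H : SimpleGraph β) : Prop :=
  ∃ f : β → Set α,
    (∀ b, (f b).Nonempty) ∧
    (∀ b, (G.induce (f b)).Connected) ∧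
    (∀ b b', b ≠ b' → Disjoint (f b) (f b')) ∧
    (∀ b b', H.Adj b b' → ∃ a ∈ f b, ∃ a' ∈ f b', G.Adj a a')
/-- The complete 4-partite graph `K_{3,3,1,1}`. -/
def K3311 : SimpleGraph ((i : Fin 4) × ![Fin 3, Fin 3, Fin 1, Fin 1] i) :=
  SimpleGraph.completeMultipartiteGraph ![Fin 3, Fin 3, Fin 1, Fin 1]

/-- The elongated triangular prism on 10 vertices: triangles `v1v3v5 = {0,2,4}` and
`v2v4v6 = {1,3,5}`, edge `v1v2` subdivided once by `a = 6`, edge `v3v4` subdivided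
once by `b = 7`, and edge `v5v6` subdivided twice by `c = 8`, `d = 9`. -/
def prismA : SimpleGraph (Fin 10) :=
  SimpleGraph.fromRel (fun i j =>
    ((i, j) : Fin 10 × Fin 10) ∈
      ([(0, 2), (2, 4), (0, 4), (1, 3), (3, 5), (1, 5),
        (0, 6), (6, 1), (2, 7), (7, 3), (4, 8), (8, 9), (9, 5)] : List (Fin 10 × Fin 10)))

namespace PrismAux

abbrev V := (i : Fin 4) × ![Fin 3, Fin 3, Fin 1, Fin 1] i

instance : ∀ i : Fin 4, Fintype (![Fin 3, Fin 3, Fin 1, Fin 1] i) := fun i =>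
  match i with
  | ⟨0, _⟩ => inferInstanceAs (Fintype (Fin 3))
  | ⟨1, _⟩ => inferInstanceAs (Fintype (Fin 3))
  | ⟨2, _⟩ => inferInstanceAs (Fintype (Fin 1))
  | ⟨3, _⟩ => inferInstanceAs (Fintype (Fin 1))

instance : ∀ i : Fin 4, DecidableEq (![Fin 3, Fin 3, Fin 1, Fin 1] i) := fun i =>
  match i with
  | ⟨0, _⟩ => inferInstanceAs (DecidableEq (Fin 3))
  | ⟨1, _⟩ => inferInstanceAs (DecidableEq (Fin 3))
  | ⟨2, _⟩ => inferInstanceAs (DecidableEq (Fin 1))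
  | ⟨3, _⟩ => inferInstanceAs (DecidableEq (Fin 1))

instance : DecidableRel prismA.Adj := fun a b =>
  inferInstanceAs (Decidable (a ≠ b ∧ (_ ∨ _)))

instance : DecidableRel prismAᶜ.Adj := fun a b =>
  inferInstanceAs (Decidable (a ≠ b ∧ ¬ _))

instance : DecidableRel K3311.Adj := fun a b =>
  inferInstanceAs (Decidable (a.1 ≠ b.1))

def L : V → List (Fin 10)
  | ⟨⟨0, _⟩, j⟩ => (![[0],[2],[4]] : Fin 3 → List (Fin 10)) j
  | ⟨⟨1, _⟩, j⟩ => (![[1],[3],[5,6]] : Fin 3 → List (Fin 10)) j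
  | ⟨⟨2, _⟩, _⟩ => [7, 8]
  | ⟨⟨3, _⟩, _⟩ => [9]

lemma conn_single {α : Type*} (G : SimpleGraph α) (a : α) :
    (G.induce {x | x ∈ [a]}).Connected := by
  rw [SimpleGraph.connected_iff]
  refine ⟨fun u v => ?_, ⟨⟨a, by simp⟩⟩⟩
  have hu : u = v := by
    have h1 := u.2; have h2 := v.2
    simp only [Set.mem_setOf_eq, List.mem_singleton] at h1 h2
    exact Subtype.ext (h1.trans h2.symm)
  exact hu ▸ SimpleGraph.Reachable.refl _

lemma conn_pair {α : Type*} (G : SimpleGraph α) {a b : α} (h : G.Adj a b) :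
    (G.induce {x | x ∈ [a, b]}).Connected := by
  rw [SimpleGraph.connected_iff]
  have ha : a ∈ ({x | x ∈ [a, b]} : Set α) := by simp
  have hb : b ∈ ({x | x ∈ [a, b]} : Set α) := by simp
  refine ⟨fun u v => ?_, ⟨⟨a, ha⟩⟩⟩
  have key : ∀ w : {x // x ∈ {x | x ∈ [a, b]}}, w = ⟨a, ha⟩ ∨ w = ⟨b, hb⟩ := by
    rintro ⟨w, hw⟩
    simp only [Set.mem_setOf_eq, List.mem_cons, List.mem_singleton, List.not_mem_nil,
      or_false] at hw
    rcases hw with rfl | rfl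
    · exact Or.inl rfl
    · exact Or.inr rfl
  have hr : (G.induce {x | x ∈ [a, b]}).Reachable ⟨a, ha⟩ ⟨b, hb⟩ :=
    SimpleGraph.Adj.reachable (by exact h)
  rcases key u with rfl | rfl <;> rcases key v with rfl | rfl
  · rfl
  · exact hr
  · exact hr.symm
  · rfl

lemma Lspec : ∀ b : V, (∃ a, L b = [a]) ∨
    (∃ a a', prismAᶜ.Adj a a' ∧ L b = [a, a']) := by decide

end PrismAux


open PrismAux in
/-- The complement of the elongated prism obtained by adding one vertex on `v1v2`, one
on `v3v4` and two on `v5v6` contains a `K_{3,3,1,1}` minor. -/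
theorem prismA_compl_K3311_minor : prismAᶜ.HasMinor K3311 := by
  refine ⟨fun b => {x | x ∈ L b}, ?_, ?_, ?_, ?_⟩
  · intro b
    have h : L b ≠ [] := by revert b; decide
    exact ⟨(L b).head h, List.head_mem h⟩
  · intro b
    show (prismAᶜ.induce {x | x ∈ L b}).Connected
    rcases Lspec b with ⟨a, h⟩ | ⟨a, a', hadj, h⟩
    · rw [h]; exact conn_single _ _
    · rw [h]; exact conn_pair _ hadj
  · intro b b' hne
    rw [Set.disjoint_left]
    intro x hx hx'
    simp only [Set.mem_setOf_eq] at hx hx'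
    exact (by decide : ∀ b b' : V, b ≠ b' → ∀ x : Fin 10, x ∈ L b → x ∈ L b' → False)
      b b' hne x hx hx'
  · intro b b' hadj
    have h : ∃ a ∈ L b, ∃ a' ∈ L b', prismAᶜ.Adj a a' := by
      revert hadj; revert b b'
      exact (by decide : ∀ b b' : V, K3311.Adj b b' → ∃ a ∈ L b, ∃ a' ∈ L b', prismAᶜ.Adj a a')
    simpa [Set.mem_setOf_eq] using h
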